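/- Let f(X) = a₀ + a₁X + ⋯ + a_nXⁿ ∈ ℤ[X] and let a, b be integers with a² < b² such that |a_n| > Σ_{i=0}^{n−1} |a_i|·(|a+b|/2)^{i−n}. Suppose |f(a)| = p^{k₁}·r and |f(b)| = p^{k₂} with p prime, k₂ > k₁ ≥ 0 and 0 < r < p. Then f is a product of at most 1 + ⌊(k₂ − k₁ − 1)·log p / log(p/r)⌋ irreducible factors over ℚ. -/

import Mathlib

open Polynomial Real

noncomputable section

/-- `d` is an admissible divisor of `f(a)`. -/
def AdmDiv (f : Polynomial ℤ) (a d : ℤ) : Prop :=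
  d ∣ f.eval a ∧
    Int.gcd d (f.eval a / d) ∣ Int.gcd (f.eval a) (f.derivative.eval a)

/-- `d` is a unitary divisor of `N`. -/
def UnitDiv (N d : ℤ) : Prop := d ∣ N ∧ Int.gcd d (N / d) = 1

/-- `f` is a product of at most `k` nonconstant irreducible factors over `ℚ`
(counting multiplicities): it cannot be written as a product of `k + 1`
nonconstant polynomials over `ℚ`. -/
def FactorsAtMost (f : Polynomial ℤ) (k : ℕ) : Prop :=
  ∀ g : Fin (k + 1) → Polynomial ℚ, (∀ i, 0 < (g i).natDegree) →
    f.map (Int.castRingHom ℚ) ≠ ∏ i, g i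

/-- `q` is the quantity `q_k` of the paper: the greatest ratio `d₂/d₁` of
admissible divisors of `f(b)` and `f(a)` not exceeding `(|f(b)|/|f(a)|)^(1/(k+1))`. -/
def IsQk (f : Polynomial ℤ) (a b : ℤ) (k : ℕ) (q : ℝ) : Prop :=
  IsGreatest {x : ℝ | ∃ d₁ d₂ : ℤ, AdmDiv f a d₁ ∧ AdmDiv f b d₂ ∧
    x = (d₂ : ℝ) / (d₁ : ℝ) ∧
    x ≤ (|((f.eval b : ℤ) : ℝ)| / |((f.eval a : ℤ) : ℝ)|) ^ ((k + 1 : ℝ))⁻¹} q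

/-- `q` is the quantity `q^u_k` of the paper, defined via unitary divisors. -/
def IsQuk (f : Polynomial ℤ) (a b : ℤ) (k : ℕ) (q : ℝ) : Prop :=
  IsGreatest {x : ℝ | ∃ d₁ d₂ : ℤ, UnitDiv (f.eval a) d₁ ∧ UnitDiv (f.eval b) d₂ ∧
    x = (d₂ : ℝ) / (d₁ : ℝ) ∧
    x ≤ (|((f.eval b : ℤ) : ℝ)| / |((f.eval a : ℤ) : ℝ)|) ^ ((k + 1 : ℝ))⁻¹} q

/-!
Over `ℤ`, a factorisation of `f` into nonconstant rational factors becomes, by Gauss's lemma,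
`f = t · ∏ hᵢ` with nonconstant integer `hᵢ`. The coefficient condition keeps every complex root
`z` of `f` in the disc `|z| < |a + b| / 2`, which lies strictly on `a`'s side of the perpendicular
bisector of `a` and `b`; so `|hᵢ(a)| < |hᵢ(b)|` for each factor. Since `hᵢ(b)` divides `p ^ k₂`
it is a power of `p`, hence `v_p(hᵢ(a)) < v_p(hᵢ(b))`, and summing over the factors (`p ∤ r`)
shows that there are at most `k₂ - k₁` of them. Finally `log p / log (p / r) ≥ 1`, so the stated
bound is at least `k₂ - k₁`.
-/

theorem Polynomial.norm_lt_of_isRoot_of_sum_lt {K : Type*} [NormedField K] {P : K[X]} {R : ℝ}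
    (hR : 0 < R)
    (hP : ∑ i ∈ Finset.range P.natDegree, ‖P.coeff i‖ * R ^ ((i : ℤ) - P.natDegree) <
      ‖P.leadingCoeff‖)
    {z : K} (hz : P.IsRoot z) : ‖z‖ < R := by
  by_contra! hRz
  set n := P.natDegree
  have hz0 : 0 < ‖z‖ := hR.trans_le hRz
  have hlead : P.leadingCoeff * z ^ n = -∑ i ∈ Finset.range n, P.coeff i * z ^ i := by
    have := hz.eq_zero
    rw [eval_eq_sum_range, Finset.sum_range_succ] at this
    exact eq_neg_of_add_eq_zero_right this
  have hterm : ∀ i ∈ Finset.range n,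
      ‖P.coeff i * z ^ i‖ ≤ ‖P.coeff i‖ * R ^ ((i : ℤ) - n) * ‖z‖ ^ n := by
    intro i hi
    have hin : (i : ℤ) - n = -((n - i : ℕ) : ℤ) := by
      have := Finset.mem_range.1 hi; push_cast [this.le]; ring
    have hpow : ‖z‖ ^ i = ‖z‖ ^ ((i : ℤ) - n) * ‖z‖ ^ n := by
      rw [← zpow_natCast, ← zpow_natCast, ← zpow_add₀ hz0.ne', sub_add_cancel]
    have hzR : ‖z‖ ^ ((i : ℤ) - n) ≤ R ^ ((i : ℤ) - n) := by
      rw [hin, zpow_neg, zpow_neg, zpow_natCast, zpow_natCast]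
      exact inv_anti₀ (by positivity) (pow_le_pow_left₀ hR.le hRz _)
    rw [norm_mul, norm_pow, hpow, mul_assoc]
    gcongr
  have : ‖P.leadingCoeff‖ * ‖z‖ ^ n ≤
      (∑ i ∈ Finset.range n, ‖P.coeff i‖ * R ^ ((i : ℤ) - n)) * ‖z‖ ^ n :=
    calc ‖P.leadingCoeff‖ * ‖z‖ ^ n = ‖∑ i ∈ Finset.range n, P.coeff i * z ^ i‖ := by
          rw [← norm_pow, ← norm_mul, hlead, norm_neg]
      _ ≤ ∑ i ∈ Finset.range n, ‖P.coeff i * z ^ i‖ := norm_sum_le _ _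
      _ ≤ _ := by rw [Finset.sum_mul]; exact Finset.sum_le_sum hterm
  exact (mul_lt_mul_of_pos_right hP (pow_pos hz0 n)).not_ge this

theorem Complex.norm_ofReal_sub_lt_norm_ofReal_sub {a b : ℝ} (hab : a ^ 2 < b ^ 2) {z : ℂ}
    (hz : ‖z‖ < |a + b| / 2) : ‖(a : ℂ) - z‖ < ‖(b : ℂ) - z‖ := by
  have hre : 2 * |z.re| < |a + b| := by linarith [Complex.abs_re_le_norm z]
  have key : (a - z.re) ^ 2 < (b - z.re) ^ 2 := by
    -- with `x = z.re`: `(b - x)² - (a - x)² = (b - a) (b + a - 2x)` and `2 |x| < |a + b|`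
    cases abs_cases (a + b) <;> cases abs_cases z.re <;> nlinarith
  rw [← sq_lt_sq₀ (norm_nonneg _) (norm_nonneg _), Complex.sq_norm, Complex.sq_norm,
    Complex.normSq_apply, Complex.normSq_apply]
  simp only [Complex.sub_re, Complex.sub_im, Complex.ofReal_re, Complex.ofReal_im]
  nlinarith

theorem Polynomial.norm_eval_lt_norm_eval_of_forall_roots {H : ℂ[X]} (hH : 0 < H.natDegree)
    {x y : ℂ} (hxy : ∀ z ∈ H.roots, ‖x - z‖ < ‖y - z‖) : ‖H.eval x‖ < ‖H.eval y‖ := by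
  have hH0 : H ≠ 0 := ne_zero_of_natDegree_gt hH
  have hy : ¬ H.IsRoot y := fun hy ↦
    (norm_nonneg _).not_gt (by simpa using hxy y ((mem_roots hH0).2 hy))
  by_cases hx : H.IsRoot x
  · rwa [hx.eq_zero, norm_zero, norm_pos_iff]
  have hroots : H.roots ≠ 0 := by
    rwa [← Multiset.card_pos, ← (IsAlgClosed.splits H).natDegree_eq_card_roots]
  have hnorm : ∀ w, ‖H.eval w‖ = ‖H.leadingCoeff‖ * (H.roots.map (‖w - ·‖)).prod := fun w ↦ by
    rw [(IsAlgClosed.splits H).eval_eq_prod_roots, norm_mul]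
    exact congrArg _
      ((map_multiset_prod (normHom : ℂ →*₀ ℝ) _).trans (by rw [Multiset.map_map]; rfl))
  rw [hnorm, hnorm]
  refine mul_lt_mul_of_pos_left (Multiset.prod_map_lt_prod_map hroots _ _ (fun z hz ↦ ?_) hxy)
    (by simpa using hH0)
  exact norm_pos_iff.2 (sub_ne_zero.2 fun h ↦ hx (h ▸ (mem_roots hH0).1 hz))

section Gauss

variable {R K : Type*} [CommRing R] [IsDomain R] [NormalizedGCDMonoid R] [Field K] [Algebra R K]
  [IsFractionRing R K]

theorem Polynomial.exists_isPrimitive_eq_C_mul_map (g : K[X]) :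
    ∃ (c : K) (h : R[X]), h.IsPrimitive ∧ g = C c * h.map (algebraMap R K) := by
  obtain ⟨s, hs, hN⟩ := IsLocalization.integerNormalization_spec (nonZeroDivisors R) g
  set N := IsLocalization.integerNormalization (nonZeroDivisors R) g
  have hs0 : algebraMap R K s ≠ 0 :=
    IsFractionRing.to_map_ne_zero_of_mem_nonZeroDivisors hs
  refine ⟨algebraMap R K N.content / algebraMap R K s, N.primPart, N.isPrimitive_primPart, ?_⟩
  apply mul_left_cancel₀ (C_ne_zero.2 hs0)
  rw [← smul_eq_C_mul, algebraMap_smul, ← hN, ← mul_assoc, ← C_mul, mul_div_cancel₀ _ hs0,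
    ← map_C, ← Polynomial.map_mul, ← N.eq_C_content_mul_primPart]

theorem Polynomial.exists_eq_C_mul_prod_of_map_eq_prod {ι : Type*} [Fintype ι] {f : R[X]}
    {g : ι → K[X]} (hfg : f.map (algebraMap R K) = ∏ i, g i) :
    ∃ (t : R) (h : ι → R[X]), f = C t * ∏ i, h i ∧ ∀ i, (g i).natDegree ≤ (h i).natDegree := by
  choose c h hprim hg using fun i ↦ exists_isPrimitive_eq_C_mul_map (R := R) (g i)
  have hP : (∏ i, h i).IsPrimitive :=
    Finset.prod_induction h IsPrimitive (fun _ _ ↦ IsPrimitive.mul) isPrimitive_one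
      fun i _ ↦ hprim i
  have hmap : f.map (algebraMap R K) = C (∏ i, c i) * (∏ i, h i).map (algebraMap R K) := by
    rw [hfg, Polynomial.map_prod, map_prod, ← Finset.prod_mul_distrib]
    exact Finset.prod_congr rfl fun i _ ↦ hg i
  -- Gauss's lemma: `∏ c i` lies in `R` because `∏ h i` is primitive.
  obtain ⟨t, ht⟩ := (lifts_iff_coeff_lifts _).1
    (hP.mul_map_mem_lifts_iff.1 ((mem_lifts _).2 ⟨f, hmap⟩)) 0
  rw [coeff_C_zero] at ht
  refine ⟨t, h, map_injective _ (IsFractionRing.injective R K) ?_, fun i ↦ ?_⟩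
  · rw [Polynomial.map_mul, map_C, ht, hmap]
  · rw [hg i]
    exact natDegree_C_mul_le _ _ |>.trans natDegree_map_le

end Gauss

theorem Nat.factorization_lt_of_lt_pow {p n e : ℕ} (hp : p.Prime) (hn : n ≠ 0) (h : n < p ^ e) :
    n.factorization p < e := by
  by_contra! he
  exact h.not_ge (Nat.le_of_dvd (Nat.pos_of_ne_zero hn)
    ((Nat.pow_dvd_pow p he).trans ((hp.pow_dvd_iff_le_factorization hn).2 le_rfl)))

theorem Nat.add_card_le_of_prod_mul_eq {ι : Type*} (s : Finset ι) {A B : ι → ℕ}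
    {p k₁ k₂ r T : ℕ} (hp : p.Prime) (hr0 : r ≠ 0) (hr : ¬ p ∣ r) (hAB : ∀ i ∈ s, A i < B i)
    (hA : (∏ i ∈ s, A i) * T = p ^ k₁ * r) (hB : (∏ i ∈ s, B i) * T = p ^ k₂) :
    k₁ + s.card ≤ k₂ := by
  have hA0 : (∏ i ∈ s, A i) * T ≠ 0 := hA ▸ mul_ne_zero (pow_ne_zero _ hp.ne_zero) hr0
  have hB0 : (∏ i ∈ s, B i) * T ≠ 0 := hB ▸ pow_ne_zero _ hp.ne_zero
  have hv : ∀ C : ι → ℕ, (∏ i ∈ s, C i) * T ≠ 0 →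
      ((∏ i ∈ s, C i) * T).factorization p = ∑ i ∈ s, (C i).factorization p + T.factorization p :=
    fun C hC ↦ by
      rw [Nat.factorization_mul (left_ne_zero_of_mul hC) (right_ne_zero_of_mul hC),
        Nat.factorization_prod (Finset.prod_ne_zero_iff.1 (left_ne_zero_of_mul hC))]
      simp
  have hvA : ∑ i ∈ s, (A i).factorization p + T.factorization p = k₁ := by
    rw [← hv A hA0, hA, Nat.factorization_mul (pow_ne_zero _ hp.ne_zero) hr0, hp.factorization_pow]
    simp [Nat.factorization_eq_zero_of_not_dvd hr]
  have hvB : ∑ i ∈ s, (B i).factorization p + T.factorization p = k₂ := by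
    rw [← hv B hB0, hB, hp.factorization_pow]
    simp
  have hgain : ∀ i ∈ s, (A i).factorization p + 1 ≤ (B i).factorization p := fun i hi ↦ by
    obtain ⟨e, -, he⟩ := (Nat.dvd_prime_pow hp).1
      ((Finset.dvd_prod_of_mem B hi).trans (Dvd.intro T hB))
    rw [he, hp.factorization_pow, Finsupp.single_eq_same]
    exact Nat.factorization_lt_of_lt_pow hp
      (Finset.prod_ne_zero_iff.1 (left_ne_zero_of_mul hA0) i hi) (he ▸ hAB i hi)
  have := Finset.sum_le_sum hgain
  rw [Finset.sum_add_distrib, Finset.sum_const, smul_eq_mul, mul_one] at this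
  omega

theorem Int.le_one_add_toNat_floor_sub_one_mul (d : ℤ) {L : ℝ} (hL : 1 ≤ L) :
    d ≤ 1 + (⌊((d : ℝ) - 1) * L⌋).toNat := by
  rcases le_or_gt d 0 with hd | hd
  · omega
  have : d - 1 ≤ ⌊((d : ℝ) - 1) * L⌋ := by
    rw [Int.le_floor]
    push_cast
    nlinarith [show (1 : ℝ) ≤ d by exact_mod_cast hd]
  omega

theorem Real.one_le_logb_div {x r : ℝ} (hr : 1 ≤ r) (hrx : r < x) : 1 ≤ Real.logb (x / r) x := by
  rw [Real.le_logb_iff_rpow_le ((one_lt_div (by linarith)).2 hrx) (by linarith), Real.rpow_one]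
  exact div_le_self (by linarith) hr

theorem Polynomial.natAbs_eval_lt_of_dvd {f h : ℤ[X]} {a b : ℤ} (hab : a ^ 2 < b ^ 2)
    (hf : ∑ i ∈ Finset.range f.natDegree,
        (|f.coeff i| : ℝ) * ((|a + b| : ℝ) / 2) ^ ((i : ℤ) - (f.natDegree : ℤ)) <
      (|f.leadingCoeff| : ℝ))
    (hhf : h ∣ f) (hh : 0 < h.natDegree) : (h.eval a).natAbs < (h.eval b).natAbs := by
  have hab' : (a : ℝ) ^ 2 < (b : ℝ) ^ 2 := by exact_mod_cast hab
  have hR : 0 < (|a + b| : ℝ) / 2 := by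
    have : a + b ≠ 0 := fun hab0 ↦ by simp [show b = -a by omega] at hab
    have : (a : ℝ) + b ≠ 0 := by exact_mod_cast this
    positivity
  have hinj : Function.Injective (Int.castRingHom ℂ) := RingHom.injective_int _
  have hroots : ∀ z ∈ (h.map (Int.castRingHom ℂ)).roots, ‖(a : ℂ) - z‖ < ‖(b : ℂ) - z‖ := by
    intro z hz
    have hfz : (f.map (Int.castRingHom ℂ)).IsRoot z :=
      (isRoot_of_mem_roots hz).dvd (Polynomial.map_dvd _ hhf)
    have hz := norm_lt_of_isRoot_of_sum_lt hR (by
      simpa [natDegree_map_eq_of_injective hinj, leadingCoeff_map_of_injective hinj] using hf) hfz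
    simpa using Complex.norm_ofReal_sub_lt_norm_ofReal_sub hab' hz
  have := norm_eval_lt_norm_eval_of_forall_roots
    (by rwa [natDegree_map_eq_of_injective hinj]) hroots
  simp only [eval_intCast_map, eq_intCast, Complex.norm_intCast] at this
  rw [← Int.ofNat_lt, Int.natCast_natAbs, Int.natCast_natAbs]
  exact_mod_cast this

theorem Polynomial.add_card_le_of_map_eq_prod {f : ℤ[X]} {a b : ℤ} (hab : a ^ 2 < b ^ 2)
    (hf : ∑ i ∈ Finset.range f.natDegree,
        (|f.coeff i| : ℝ) * ((|a + b| : ℝ) / 2) ^ ((i : ℤ) - (f.natDegree : ℤ)) <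
      (|f.leadingCoeff| : ℝ))
    {p k₁ k₂ r : ℕ} (hp : p.Prime) (hr0 : 0 < r) (hrp : r < p)
    (hfa : (f.eval a).natAbs = p ^ k₁ * r) (hfb : (f.eval b).natAbs = p ^ k₂)
    {ι : Type*} [Fintype ι] {g : ι → ℚ[X]} (hg : ∀ i, 0 < (g i).natDegree)
    (hfg : f.map (Int.castRingHom ℚ) = ∏ i, g i) : k₁ + Fintype.card ι ≤ k₂ := by
  obtain ⟨t, h, hft, hdeg⟩ :=
    exists_eq_C_mul_prod_of_map_eq_prod (R := ℤ) (by rwa [algebraMap_int_eq])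
  have hnatAbs : ∀ x, (f.eval x).natAbs = (∏ i, ((h i).eval x).natAbs) * t.natAbs := fun x ↦ by
    rw [hft, eval_mul, eval_C, eval_prod, Int.natAbs_mul, mul_comm]
    exact congrArg (· * _) (map_prod Int.natAbsHom _ _)
  have hlt : ∀ i ∈ Finset.univ, ((h i).eval a).natAbs < ((h i).eval b).natAbs := fun i _ ↦
    natAbs_eval_lt_of_dvd hab hf (hft ▸ (Finset.dvd_prod_of_mem h (Finset.mem_univ i)).mul_left _)
      ((hg i).trans_le (hdeg i))
  exact Nat.add_card_le_of_prod_mul_eq Finset.univ hp hr0.ne' (Nat.not_dvd_of_pos_of_lt hr0 hrp)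
    hlt (hnatAbs a ▸ hfa) (hnatAbs b ▸ hfb)

theorem stmt8_general (f : Polynomial ℤ) (a b : ℤ) (hab2 : a ^ 2 < b ^ 2)
    (hlead : (|f.leadingCoeff| : ℝ) >
      ∑ i ∈ Finset.range f.natDegree,
        (|f.coeff i| : ℝ) * ((|a + b| : ℝ) / 2) ^ ((i : ℤ) - (f.natDegree : ℤ)))
    (p : ℕ) (hp : p.Prime) (k₁ k₂ r : ℕ) (hr0 : 0 < r) (hrp : r < p)
    (hfa : (f.eval a).natAbs = p ^ k₁ * r) (hfb : (f.eval b).natAbs = p ^ k₂) :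
    FactorsAtMost f
      (1 + (⌊((k₂ : ℝ) - (k₁ : ℝ) - 1) * Real.logb ((p : ℝ) / (r : ℝ)) (p : ℝ)⌋).toNat) := by
  intro g hg hfg
  have hcard := add_card_le_of_map_eq_prod hab2 hlead hp hr0 hrp hfa hfb hg hfg
  have hK := Int.le_one_add_toNat_floor_sub_one_mul ((k₂ : ℤ) - k₁)
    (Real.one_le_logb_div (x := p) (r := r) (by exact_mod_cast hr0) (by exact_mod_cast hrp))
  push_cast at hK
  rw [Fintype.card_fin] at hcard
  omega

theorem stmt8 (f : Polynomial ℤ) (a b : ℤ) (hab2 : a ^ 2 < b ^ 2)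
    (hlead : (|f.leadingCoeff| : ℝ) >
      ∑ i ∈ Finset.range f.natDegree,
        (|f.coeff i| : ℝ) * ((|a + b| : ℝ) / 2) ^ ((i : ℤ) - (f.natDegree : ℤ)))
    (p : ℕ) (hp : p.Prime) (k₁ k₂ r : ℕ) (hk : k₁ < k₂) (hr0 : 0 < r) (hrp : r < p)
    (hfa : (f.eval a).natAbs = p ^ k₁ * r) (hfb : (f.eval b).natAbs = p ^ k₂) :
    FactorsAtMost f
      (1 + (⌊((k₂ : ℝ) - (k₁ : ℝ) - 1) * Real.logb ((p : ℝ) / (r : ℝ)) (p : ℝ)⌋).toNat) :=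
  stmt8_general f a b hab2 hlead p hp k₁ k₂ r hr0 hrp hfa hfb
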